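/- The balanced presentation ⟨x, y | y = w^{-1} x w, x^{n+1} = y^n⟩, where w is a word in x^{±1}, y^{±1} (for example w = yx), presents the trivial group for every integer n ≥ 0. -/
import Mathlib


lemma aux_conj_pow {G : Type*} [Group G] (a b : G) (m : ℕ) :
    (a⁻¹ * b * a) ^ m = a⁻¹ * b ^ m * a := by
  have := conj_pow (a := a⁻¹) (b := b) (i := m)
  simpa [inv_inv] using this

lemma aux_triv {G : Type*} [Group G] (n : ℕ) (x y : G)
    (h1 : y * ((y * x)⁻¹ * x * (y * x))⁻¹ = 1)
    (h2 : x ^ (n + 1) * (y ^ n)⁻¹ = 1) : x = 1 ∧ y = 1 := by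
  rw [mul_inv_eq_one] at h1 h2
  have hyn : y ^ n = (y * x)⁻¹ * x ^ n * (y * x) := by
    conv_lhs => rw [h1]
    exact aux_conj_pow _ _ _
  have hc : x ^ (n + 1) * y = y * x ^ (n + 1) := by
    rw [h2, ← pow_succ, ← pow_succ']
  have hkey : x ^ (n + 1) = (y * x)⁻¹ * x ^ n * (y * x) := by rw [h2, hyn]
  have h3 : y * x * x ^ (n + 1) = x ^ n * (y * x) := by
    rw [hkey]; group
  have h4 : y * x ^ (n + 1) * x = x ^ n * y * x := by
    calc y * x ^ (n + 1) * x = y * (x ^ (n + 1) * x) := by rw [mul_assoc]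
      _ = y * (x * x ^ (n + 1)) := by rw [← pow_succ, ← pow_succ']
      _ = y * x * x ^ (n + 1) := by rw [mul_assoc]
      _ = x ^ n * (y * x) := h3
      _ = x ^ n * y * x := by rw [mul_assoc]
  have key2 : y * x ^ (n + 1) = x ^ n * y := mul_right_cancel h4
  have h5 : x ^ n * x * y = x ^ n * y := by rw [← pow_succ, hc, key2]
  have h6 : x ^ n * x = x ^ n * 1 := by rw [mul_one]; exact mul_right_cancel h5
  have hx : x = 1 := mul_left_cancel h6
  refine ⟨hx, ?_⟩
  rw [hx] at h1
  simpa using h1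

lemma aux_presented (n : ℕ) (rels : Set (FreeGroup (Fin 2)))
    (hrels : rels = {FreeGroup.of 1 * ((FreeGroup.of 1 * FreeGroup.of 0)⁻¹ * FreeGroup.of 0 *
        (FreeGroup.of 1 * FreeGroup.of 0))⁻¹,
      FreeGroup.of 0 ^ (n + 1) * ((FreeGroup.of 1 : FreeGroup (Fin 2)) ^ n)⁻¹}) :
    ∀ g : PresentedGroup rels, g = 1 := by
  intro g
  set X : FreeGroup (Fin 2) := FreeGroup.of 0
  set Y : FreeGroup (Fin 2) := FreeGroup.of 1
  have hrel : ∀ r ∈ rels, PresentedGroup.mk rels r = 1 := fun r hr =>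
    (QuotientGroup.eq_one_iff r).2 (Subgroup.subset_normalClosure hr)
  have h1 : PresentedGroup.mk rels (Y * ((Y * X)⁻¹ * X * (Y * X))⁻¹) = 1 :=
    hrel _ (by rw [hrels]; exact Set.mem_insert _ _)
  have h2 : PresentedGroup.mk rels (X ^ (n + 1) * (Y ^ n)⁻¹) = 1 :=
    hrel _ (by rw [hrels]; exact Set.mem_insert_of_mem _ rfl)
  set x : PresentedGroup rels := PresentedGroup.mk rels X with hx
  set y : PresentedGroup rels := PresentedGroup.mk rels Y with hy
  have h1' : y * ((y * x)⁻¹ * x * (y * x))⁻¹ = 1 := by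
    rw [hx, hy, ← h1]; simp [map_mul, map_inv, map_pow]
  have h2' : x ^ (n + 1) * (y ^ n)⁻¹ = 1 := by
    rw [hx, hy, ← h2]; simp [map_mul, map_inv, map_pow]
  obtain ⟨hx1, hy1⟩ := aux_triv n x y h1' h2'
  refine Subgroup.mem_bot.1 (PresentedGroup.generated_by rels ⊥ (fun j => ?_) g)
  fin_cases j
  · exact Subgroup.mem_bot.2 hx1
  · exact Subgroup.mem_bot.2 hy1

/- STATEMENT 11: the balanced presentation
⟨x, y | y = w⁻¹ x w, xⁿ⁺¹ = yⁿ⟩, with w = yx (the word arising for k = 1),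
presents the trivial group for every n ≥ 0. -/
theorem stmt11 (n : ℕ) :
    ∀ g : PresentedGroup
      (let x : FreeGroup (Fin 2) := FreeGroup.of 0
       let y : FreeGroup (Fin 2) := FreeGroup.of 1
       let w : FreeGroup (Fin 2) := y * x
       ({y * (w⁻¹ * x * w)⁻¹, x ^ (n + 1) * (y ^ n)⁻¹} : Set (FreeGroup (Fin 2)))),
    g = 1 := by
  exact aux_presented n _ rfl
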